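/- arXiv:1303.6728 — 5 statements merged into one kernel-verified Lean document; each statement's English description precedes it below -/
import Mathlib

section
/- Let ε > 0 and suppose λ > 0 is such that ∫_{[0,1]²} |Pφ|² ≥ λ · ∫_{[0,1]²} |φ|² for every smooth φ : ℝ² → ℂ that is 1-periodic in both variables. Then for all smooth u, v : ℝ × ℝ² → ℂ that are 1-periodic in x₂ and in x₃ and satisfy v(0,z) = v(ε,z) = 0 for all z ∈ ℝ², one has ∫_{[0,ε]×[0,1]²} ( |∂₁u − i·P†v|² + |∂₁v + i·Pu|² ) ≥ min(λ, 2/ε²) · ∫_{[0,ε]×[0,1]²} ( |u|² + |v|² ). (Flat-model version of the first eigenvalue estimate λ_{𝒟₋} ≥ min{λ_{∂̄}, 2/ε²} of Theorem 1ev, for the boundary condition v|_{∂A_ε} = 0.) -/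
open MeasureTheory

noncomputable section

/-- Points of the 3-dimensional model `A_ε = [0,ε] × T²`. -/
abbrev Pt : Type := ℝ × (ℝ × ℝ)

/-- Partial derivative in the second coordinate (`x₂`). -/
def d2 (φ : ℝ × ℝ → ℂ) (z : ℝ × ℝ) : ℂ := fderiv ℝ φ z (1, 0)

/-- Partial derivative in the third coordinate (`x₃`). -/
def d3 (φ : ℝ × ℝ → ℂ) (z : ℝ × ℝ) : ℂ := fderiv ℝ φ z (0, 1)

/-- The twisted Cauchy–Riemann operator `Pφ = ∂₂φ + i ∂₃φ + a·φ`. -/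
def POp (a φ : ℝ × ℝ → ℂ) (z : ℝ × ℝ) : ℂ :=
  d2 φ z + Complex.I * d3 φ z + a z * φ z

/-- The formal adjoint `P†φ = −∂₂φ + i ∂₃φ + conj(a)·φ`. -/
def PAdj (a φ : ℝ × ℝ → ℂ) (z : ℝ × ℝ) : ℂ :=
  -(d2 φ z) + Complex.I * d3 φ z + (starRingEnd ℂ) (a z) * φ z

/-- Partial derivative in the first coordinate (`x₁`). -/
def d1 (u : Pt → ℂ) (p : Pt) : ℂ := fderiv ℝ u p (1, 0, 0)

/-- Slice-wise action of `P` on functions of `(x₁, z)`. -/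
def POpS (a : ℝ × ℝ → ℂ) (u : Pt → ℂ) (p : Pt) : ℂ := POp a (fun z => u (p.1, z)) p.2

/-- Slice-wise action of `P†` on functions of `(x₁, z)`. -/
def PAdjS (a : ℝ × ℝ → ℂ) (u : Pt → ℂ) (p : Pt) : ℂ := PAdj a (fun z => u (p.1, z)) p.2

/-- `1`-periodicity in both variables of `ℝ²`. -/
def Per2 (φ : ℝ × ℝ → ℂ) : Prop :=
  (∀ x y : ℝ, φ (x + 1, y) = φ (x, y)) ∧ (∀ x y : ℝ, φ (x, y + 1) = φ (x, y))

/-- `1`-periodicity in `x₂` and `x₃` for functions on `ℝ × ℝ²`. -/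
def Per23 (u : Pt → ℂ) : Prop := ∀ t : ℝ, Per2 (fun z => u (t, z))

/-- The fundamental domain `[0,1]²` of the torus. -/
def T2 : Set (ℝ × ℝ) := Set.Icc (0:ℝ) 1 ×ˢ Set.Icc (0:ℝ) 1

/-- The thin domain `A_ε = [0,ε] × [0,1]²`. -/
def Aeps (ε : ℝ) : Set Pt := Set.Icc (0:ℝ) ε ×ˢ T2







section Lines

variable {F : Type*} [NormedAddCommGroup F] [NormedSpace ℝ F]

lemma hasDerivAt_line1 {f : Pt → F} (hf : Differentiable ℝ f) (t : ℝ) (z : ℝ × ℝ) :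
    HasDerivAt (fun s => f (s, z)) (fderiv ℝ f (t, z) (1, 0, 0)) t := by
  have h := (hf (t, z)).hasFDerivAt.comp_hasDerivAt t
    ((hasDerivAt_id t).prodMk (hasDerivAt_const t z))
  simpa [Function.comp_def, Prod.mk_zero_zero] using h

lemma hasDerivAt_line2 {f : Pt → F} (hf : Differentiable ℝ f) (t x y : ℝ) :
    HasDerivAt (fun s => f (t, s, y)) (fderiv ℝ f (t, x, y) (0, 1, 0)) x := by
  have h := (hf (t, x, y)).hasFDerivAt.comp_hasDerivAt x
    ((hasDerivAt_const x t).prodMk ((hasDerivAt_id x).prodMk (hasDerivAt_const x y)))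
  simpa [Function.comp_def] using h

lemma hasDerivAt_line3 {f : Pt → F} (hf : Differentiable ℝ f) (t x y : ℝ) :
    HasDerivAt (fun s => f (t, x, s)) (fderiv ℝ f (t, x, y) (0, 0, 1)) y := by
  have h := (hf (t, x, y)).hasFDerivAt.comp_hasDerivAt y
    ((hasDerivAt_const y t).prodMk ((hasDerivAt_const y x).prodMk (hasDerivAt_id y)))
  simpa [Function.comp_def] using h

end Lines

lemma HasDerivAt.conj' {f : ℝ → ℂ} {f' : ℂ} {t : ℝ} (hf : HasDerivAt f f' t) :
    HasDerivAt (fun s => (starRingEnd ℂ) (f s)) ((starRingEnd ℂ) f') t := by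
  simpa [Function.comp_def] using (Complex.conjCLE.hasFDerivAt.comp_hasDerivAt t hf)

lemma HasDerivAt.im' {f : ℝ → ℂ} {f' : ℂ} {t : ℝ} (hf : HasDerivAt f f' t) :
    HasDerivAt (fun s => (f s).im) f'.im t := by
  simpa [Function.comp_def] using (Complex.imCLM.hasFDerivAt.comp_hasDerivAt t hf)

lemma HasDerivAt.re' {f : ℝ → ℂ} {f' : ℂ} {t : ℝ} (hf : HasDerivAt f f' t) :
    HasDerivAt (fun s => (f s).re) f'.re t := by
  simpa [Function.comp_def] using (Complex.reCLM.hasFDerivAt.comp_hasDerivAt t hf)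

lemma fderiv_shift {f : Pt → ℂ} (hf : Differentiable ℝ f) (c : Pt)
    (hper : ∀ p : Pt, f (p + c) = f p) (p : Pt) :
    fderiv ℝ f (p + c) = fderiv ℝ f p := by
  have h1 : HasFDerivAt (fun q : Pt => f (q + c)) (fderiv ℝ f (p + c)) p := by
    have h := (hf (p + c)).hasFDerivAt.comp p ((hasFDerivAt_id p).add_const c)
    simpa [Function.comp_def] using h
  rw [show (fun q : Pt => f (q + c)) = f from funext hper] at h1
  exact (h1.fderiv).symm

lemma d2_slice {u : Pt → ℂ} (hu : Differentiable ℝ u) (p : Pt) :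
    d2 (fun z => u (p.1, z)) p.2 = fderiv ℝ u p ((0 : ℝ), (1 : ℝ), (0 : ℝ)) := by
  have hι : HasFDerivAt (fun z : ℝ × ℝ => ((p.1, z) : Pt))
      (((0 : (ℝ × ℝ) →L[ℝ] ℝ)).prod (ContinuousLinearMap.id ℝ (ℝ × ℝ))) p.2 :=
    (hasFDerivAt_const p.1 p.2).prodMk (hasFDerivAt_id p.2)
  have h := ((hu (p.1, p.2)).hasFDerivAt.comp p.2 hι)
  have h2 : fderiv ℝ (fun z => u (p.1, z)) p.2 =
      (fderiv ℝ u (p.1, p.2)).comp (((0 : (ℝ × ℝ) →L[ℝ] ℝ)).prod (ContinuousLinearMap.id ℝ (ℝ × ℝ))) := by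
    simpa [Function.comp_def] using h.fderiv
  simp [d2, h2]

lemma d3_slice {u : Pt → ℂ} (hu : Differentiable ℝ u) (p : Pt) :
    d3 (fun z => u (p.1, z)) p.2 = fderiv ℝ u p ((0 : ℝ), (0 : ℝ), (1 : ℝ)) := by
  have hι : HasFDerivAt (fun z : ℝ × ℝ => ((p.1, z) : Pt))
      (((0 : (ℝ × ℝ) →L[ℝ] ℝ)).prod (ContinuousLinearMap.id ℝ (ℝ × ℝ))) p.2 :=
    (hasFDerivAt_const p.1 p.2).prodMk (hasFDerivAt_id p.2)
  have h := ((hu (p.1, p.2)).hasFDerivAt.comp p.2 hι)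
  have h2 : fderiv ℝ (fun z => u (p.1, z)) p.2 =
      (fderiv ℝ u (p.1, p.2)).comp (((0 : (ℝ × ℝ) →L[ℝ] ℝ)).prod (ContinuousLinearMap.id ℝ (ℝ × ℝ))) := by
    simpa [Function.comp_def] using h.fderiv
  simp [d3, h2]


lemma isCompact_T2 : IsCompact T2 := isCompact_Icc.prod isCompact_Icc
lemma isCompact_Aeps (ε : ℝ) : IsCompact (Aeps ε) := isCompact_Icc.prod isCompact_T2

lemma integrableOn_Aeps {E : Type*} [NormedAddCommGroup E] {ε : ℝ} {f : Pt → E} (hf : Continuous f) :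
    IntegrableOn f (Aeps ε) :=
  hf.continuousOn.integrableOn_compact (isCompact_Aeps ε)

section Prod
variable {α β E : Type*} [MeasureSpace α] [MeasureSpace β]
  [SigmaFinite (volume : Measure α)] [SigmaFinite (volume : Measure β)]
  [NormedAddCommGroup E] [NormedSpace ℝ E]

lemma key1 (f : α × β → E) (s : Set α) (t : Set β)
    (hf : IntegrableOn f (s ×ˢ t)) :
    ∫ p in s ×ˢ t, f p = ∫ x in s, ∫ y in t, f (x, y) := by
  rw [IntegrableOn, Measure.volume_eq_prod] at hf
  rw [Measure.volume_eq_prod]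
  exact setIntegral_prod f hf

lemma key2 (f : α × β → E) (s : Set α) (t : Set β)
    (hf : IntegrableOn f (s ×ˢ t)) :
    ∫ p in s ×ˢ t, f p = ∫ y in t, ∫ x in s, f (x, y) := by
  rw [key1 f s t hf]
  have hf' : Integrable (Function.uncurry fun x y => f (x, y))
      ((volume.restrict s).prod (volume.restrict t)) := by
    rw [Measure.prod_restrict]
    rw [IntegrableOn, Measure.volume_eq_prod] at hf
    exact hf
  exact integral_integral_swap hf'
end Prod

lemma FTC_Icc {b : ℝ} (hb : 0 ≤ b) (g G : ℝ → ℝ) (hG : Continuous G)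
    (hd : ∀ x, HasDerivAt g (G x) x) :
    ∫ x in Set.Icc 0 b, G x = g b - g 0 := by
  rw [MeasureTheory.integral_Icc_eq_integral_Ioc, ← intervalIntegral.integral_of_le hb]
  exact intervalIntegral.integral_eq_sub_of_hasDerivAt (fun x _ => hd x)
    (hG.intervalIntegrable 0 b)

lemma vanish1 {ε : ℝ} (hε : 0 ≤ ε) (g G : Pt → ℝ) (hG : Continuous G)
    (hd : ∀ (t : ℝ) (z : ℝ × ℝ), HasDerivAt (fun s => g (s, z)) (G (t, z)) t)
    (hb : ∀ z, g (ε, z) = g (0, z)) :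
    ∫ p in Aeps ε, G p = 0 := by
  rw [Aeps, key2 G _ _ (integrableOn_Aeps hG)]
  have h : ∀ z : ℝ × ℝ, ∫ t in Set.Icc 0 ε, G (t, z) = 0 := by
    intro z
    rw [FTC_Icc hε (fun s => g (s, z)) (fun t => G (t, z))
      (hG.comp (continuous_id.prodMk continuous_const)) (fun t => hd t z), hb z, sub_self]
  simp only [h, integral_zero]

lemma vanish2 {ε : ℝ} (g G : Pt → ℝ) (hG : Continuous G)
    (hd : ∀ (t x y : ℝ), HasDerivAt (fun s => g (t, s, y)) (G (t, x, y)) x)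
    (hb : ∀ t y, g (t, 1, y) = g (t, 0, y)) :
    ∫ p in Aeps ε, G p = 0 := by
  rw [Aeps, key1 G _ _ (integrableOn_Aeps hG)]
  have h : ∀ t : ℝ, ∫ z in T2, G (t, z) = 0 := by
    intro t
    have hcont : Continuous fun z : ℝ × ℝ => G (t, z) :=
      hG.comp (continuous_const.prodMk continuous_id)
    rw [T2, key2 (fun z : ℝ × ℝ => G (t, z)) _ _
      (hcont.continuousOn.integrableOn_compact (isCompact_Icc.prod isCompact_Icc))]
    have h2 : ∀ y : ℝ, ∫ x in Set.Icc (0:ℝ) 1, G (t, x, y) = 0 := by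
      intro y
      rw [FTC_Icc zero_le_one (fun s => g (t, s, y)) (fun x => G (t, x, y))
        (hG.comp (continuous_const.prodMk (continuous_id.prodMk continuous_const)))
        (fun x => hd t x y), hb t y, sub_self]
    simp only [h2, integral_zero]
  simp only [h, integral_zero]

lemma vanish3 {ε : ℝ} (g G : Pt → ℝ) (hG : Continuous G)
    (hd : ∀ (t x y : ℝ), HasDerivAt (fun s => g (t, x, s)) (G (t, x, y)) y)
    (hb : ∀ t x, g (t, x, 1) = g (t, x, 0)) :
    ∫ p in Aeps ε, G p = 0 := by
  rw [Aeps, key1 G _ _ (integrableOn_Aeps hG)]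
  have h : ∀ t : ℝ, ∫ z in T2, G (t, z) = 0 := by
    intro t
    have hcont : Continuous fun z : ℝ × ℝ => G (t, z) :=
      hG.comp (continuous_const.prodMk continuous_id)
    rw [T2, key1 (fun z : ℝ × ℝ => G (t, z)) _ _
      (hcont.continuousOn.integrableOn_compact (isCompact_Icc.prod isCompact_Icc))]
    have h2 : ∀ x : ℝ, ∫ y in Set.Icc (0:ℝ) 1, G (t, x, y) = 0 := by
      intro x
      rw [FTC_Icc zero_le_one (fun s => g (t, x, s)) (fun y => G (t, x, y))
        (hG.comp (continuous_const.prodMk (continuous_const.prodMk continuous_id)))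
        (fun y => hd t x y), hb t x, sub_self]
    simp only [h2, integral_zero]
  simp only [h, integral_zero]

section Prod
variable {α β E : Type*} [MeasureSpace α] [MeasureSpace β]
  [SigmaFinite (volume : Measure α)] [SigmaFinite (volume : Measure β)]
  [NormedAddCommGroup E] [NormedSpace ℝ E]
lemma int_prod_left (f : α × β → E) (s : Set α) (t : Set β)
    (hf : IntegrableOn f (s ×ˢ t)) :
    IntegrableOn (fun x => ∫ y in t, f (x, y)) s := by
  rw [IntegrableOn, Measure.volume_eq_prod, ← Measure.prod_restrict] at hf
  exact hf.integral_prod_left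
lemma int_prod_right (f : α × β → E) (s : Set α) (t : Set β)
    (hf : IntegrableOn f (s ×ˢ t)) :
    IntegrableOn (fun y => ∫ x in s, f (x, y)) t := by
  rw [IntegrableOn, Measure.volume_eq_prod, ← Measure.prod_restrict] at hf
  exact hf.integral_prod_right
end Prod

/-- Monotone comparison of integrals over `A_ε` from slice-wise comparison over `T²`. -/
lemma slice_mono {ε : ℝ} (f h : Pt → ℝ) (hf : Continuous f) (hh : Continuous h)
    (hle : ∀ t : ℝ, (∫ z in T2, f (t, z)) ≤ ∫ z in T2, h (t, z)) :
    ∫ p in Aeps ε, f p ≤ ∫ p in Aeps ε, h p := by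
  rw [Aeps, key1 f _ _ (integrableOn_Aeps hf), key1 h _ _ (integrableOn_Aeps hh)]
  exact integral_mono (int_prod_left f _ _ (integrableOn_Aeps hf))
    (int_prod_left h _ _ (integrableOn_Aeps hh)) (fun t => hle t)

/-- Monotone comparison of integrals over `A_ε` from fiber-wise comparison over `[0,ε]`. -/
lemma slice_mono' {ε : ℝ} (f h : Pt → ℝ) (hf : Continuous f) (hh : Continuous h)
    (hle : ∀ z : ℝ × ℝ, (∫ t in Set.Icc 0 ε, f (t, z)) ≤ ∫ t in Set.Icc 0 ε, h (t, z)) :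
    ∫ p in Aeps ε, f p ≤ ∫ p in Aeps ε, h p := by
  rw [Aeps, key2 f _ _ (integrableOn_Aeps hf), key2 h _ _ (integrableOn_Aeps hh)]
  exact integral_mono (int_prod_right f _ _ (integrableOn_Aeps hf))
    (int_prod_right h _ _ (integrableOn_Aeps hh)) (fun z => hle z)

/-- Elementary Cauchy–Schwarz for set integrals on ℝ. -/
lemma cs_integral {s : Set ℝ} (hs : MeasurableSet s) (hfin : volume s ≠ ⊤) (g : ℝ → ℝ)
    (hg : IntegrableOn g s) (hg2 : IntegrableOn (fun x => g x ^ 2) s) :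
    (∫ x in s, g x) ^ 2 ≤ (volume s).toReal * ∫ x in s, g x ^ 2 := by
  have hfm : IsFiniteMeasure (volume.restrict s) :=
    ⟨by rwa [Measure.restrict_apply_univ, lt_top_iff_ne_top]⟩
  set m := (volume s).toReal with hm
  set A := ∫ x in s, g x with hA
  have hmnn : 0 ≤ m := ENNReal.toReal_nonneg
  have h0 : (0:ℝ) ≤ ∫ x in s, (m * g x - A) ^ 2 :=
    integral_nonneg fun x => sq_nonneg _

  have hexp : ∫ x in s, (m * g x - A) ^ 2
      = m ^ 2 * (∫ x in s, g x ^ 2) - 2 * m * A * A + A ^ 2 * m := by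
    have e1 : ∀ x, (m * g x - A) ^ 2 = m ^ 2 * g x ^ 2 - 2 * m * A * g x + A ^ 2 := by
      intro x; ring
    simp only [e1]
    have i1 : Integrable (fun x : ℝ => m ^ 2 * g x ^ 2 - 2 * m * A * g x)
        (volume.restrict s) := (hg2.const_mul _).sub (hg.const_mul _)
    rw [integral_add i1 (integrable_const _),
      integral_sub (hg2.const_mul _) (hg.const_mul _), integral_const_mul, integral_const_mul,
      setIntegral_const, smul_eq_mul]
    rw [← hA, show volume.real s = m from rfl]; ring
  rw [hexp] at h0
  have h1 : m * A ^ 2 ≤ m ^ 2 * ∫ x in s, g x ^ 2 := by nlinarith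
  rcases eq_or_lt_of_le hmnn with hm0 | hmpos
  · have hA0 : A = 0 := by
      have hvs : volume s = 0 := by
        rcases (ENNReal.toReal_eq_zero_iff (volume s)).mp hm0.symm with h' | h'
        · exact h'
        · exact absurd h' hfin
      rw [hA, Measure.restrict_eq_zero.mpr hvs, integral_zero_measure]
    rw [hA0, ← hm0]; simp
  · nlinarith

/-- 1-D Poincaré inequality with Dirichlet condition at `0`. -/
lemma poincare1d {ε : ℝ} (hε : 0 < ε) (f : ℝ → ℂ) (f' : ℝ → ℂ) (hf' : Continuous f')
    (hd : ∀ t, HasDerivAt f (f' t) t) (h0 : f 0 = 0) :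
    ∫ t in Set.Icc 0 ε, ‖f t‖ ^ 2 ≤ ε ^ 2 / 2 * ∫ t in Set.Icc 0 ε, ‖f' t‖ ^ 2 := by
  set M := ∫ t in Set.Icc 0 ε, ‖f' t‖ ^ 2 with hM
  have hMnn : 0 ≤ M := integral_nonneg fun t => sq_nonneg _
  have hdiff : Differentiable ℝ f := fun t => (hd t).differentiableAt
  have hfc : Continuous f := hdiff.continuous
  have key : ∀ t ∈ Set.Icc (0:ℝ) ε, ‖f t‖ ^ 2 ≤ t * M := by
    intro t ht
    obtain ⟨ht0, htε⟩ := ht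
    have hft : f t = ∫ s in (0:ℝ)..t, f' s := by
      rw [intervalIntegral.integral_eq_sub_of_hasDerivAt (fun x _ => hd x)
        (hf'.intervalIntegrable 0 t), h0, sub_zero]
    have h1 : ‖f t‖ ≤ ∫ s in Set.Icc 0 t, ‖f' s‖ := by
      rw [hft, MeasureTheory.integral_Icc_eq_integral_Ioc,
        ← intervalIntegral.integral_of_le ht0]
      exact intervalIntegral.norm_integral_le_integral_norm ht0
    have h2 : (∫ s in Set.Icc 0 t, ‖f' s‖) ^ 2 ≤ t * ∫ s in Set.Icc 0 t, ‖f' s‖ ^ 2 := by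
      have hcs := cs_integral (s := Set.Icc (0:ℝ) t) measurableSet_Icc
        (by rw [Real.volume_Icc]; exact ENNReal.ofReal_ne_top) (fun s => ‖f' s‖)
        (hf'.norm.continuousOn.integrableOn_compact isCompact_Icc)
        ((hf'.norm.pow 2).continuousOn.integrableOn_compact isCompact_Icc)
      rwa [Real.volume_Icc, sub_zero, ENNReal.toReal_ofReal ht0] at hcs
    have h3 : ∫ s in Set.Icc 0 t, ‖f' s‖ ^ 2 ≤ M := by
      rw [hM]
      exact setIntegral_mono_set ((hf'.norm.pow 2).continuousOn.integrableOn_compact isCompact_Icc)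
        (Filter.Eventually.of_forall fun s => sq_nonneg _)
        ((Set.Icc_subset_Icc_right htε).eventuallyLE)
    calc ‖f t‖ ^ 2 ≤ (∫ s in Set.Icc 0 t, ‖f' s‖) ^ 2 :=
          pow_le_pow_left₀ (norm_nonneg _) h1 2
      _ ≤ t * ∫ s in Set.Icc 0 t, ‖f' s‖ ^ 2 := h2
      _ ≤ t * M := mul_le_mul_of_nonneg_left h3 ht0
  calc ∫ t in Set.Icc 0 ε, ‖f t‖ ^ 2 ≤ ∫ t in Set.Icc 0 ε, t * M :=
        setIntegral_mono_on ((hfc.norm.pow 2).continuousOn.integrableOn_compact isCompact_Icc)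
          ((continuous_id.mul continuous_const).continuousOn.integrableOn_compact isCompact_Icc)
          measurableSet_Icc key
    _ = (∫ t in Set.Icc 0 ε, t) * M := by rw [integral_mul_const]
    _ = ε ^ 2 / 2 * M := by
        rw [MeasureTheory.integral_Icc_eq_integral_Ioc, ← intervalIntegral.integral_of_le hε.le,
          integral_id]
        ring

def ee1 : Pt := ((1:ℝ), (0:ℝ), (0:ℝ))
def ee2 : Pt := ((0:ℝ), (1:ℝ), (0:ℝ))
def ee3 : Pt := ((0:ℝ), (0:ℝ), (1:ℝ))

/-- Directional derivative. -/
def Dw (w : Pt) (f : Pt → ℂ) (p : Pt) : ℂ := fderiv ℝ f p w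

/-- Second directional derivative. -/
def DDw (w w' : Pt) (f : Pt → ℂ) (p : Pt) : ℂ := fderiv ℝ (fderiv ℝ f) p w w'

/-- The operator `P` acting slice-wise, written through full derivatives. -/
def PuF (a : ℝ × ℝ → ℂ) (u : Pt → ℂ) (p : Pt) : ℂ :=
  Dw ee2 u p + Complex.I * Dw ee3 u p + a p.2 * u p

/-- The operator `P†` acting slice-wise, written through full derivatives. -/
def QvF (a : ℝ × ℝ → ℂ) (v : Pt → ℂ) (p : Pt) : ℂ :=
  -(Dw ee2 v p) + Complex.I * Dw ee3 v p + (starRingEnd ℂ) (a p.2) * v p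

def g1F (a : ℝ × ℝ → ℂ) (u v : Pt → ℂ) (p : Pt) : ℝ := (v p * (starRingEnd ℂ) (PuF a u p)).im
def g2F (u v : Pt → ℂ) (p : Pt) : ℝ := (v p * (starRingEnd ℂ) (Dw ee1 u p)).im
def g3F (u v : Pt → ℂ) (p : Pt) : ℝ := (v p * (starRingEnd ℂ) (Dw ee1 u p)).re

def c1F (a : ℝ × ℝ → ℂ) (u v : Pt → ℂ) (p : Pt) : ℝ :=
  (Dw ee1 v p * (starRingEnd ℂ) (PuF a u p) +
    v p * (starRingEnd ℂ) (DDw ee1 ee2 u p + Complex.I * DDw ee1 ee3 u p + a p.2 * Dw ee1 u p)).im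
def c2F (u v : Pt → ℂ) (p : Pt) : ℝ :=
  (Dw ee2 v p * (starRingEnd ℂ) (Dw ee1 u p) + v p * (starRingEnd ℂ) (DDw ee2 ee1 u p)).im
def c3F (u v : Pt → ℂ) (p : Pt) : ℝ :=
  (Dw ee3 v p * (starRingEnd ℂ) (Dw ee1 u p) + v p * (starRingEnd ℂ) (DDw ee3 ee1 u p)).re

lemma contDiff_Dw {f : Pt → ℂ} (hf : ContDiff ℝ (⊤ : ℕ∞) f) (w : Pt) : ContDiff ℝ (⊤ : ℕ∞) (Dw w f) :=
  (hf.fderiv_right (by simp)).clm_apply contDiff_const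

lemma contDiff_DDw {f : Pt → ℂ} (hf : ContDiff ℝ (⊤ : ℕ∞) f) (w w' : Pt) :
    ContDiff ℝ (⊤ : ℕ∞) (DDw w w' f) :=
  ((((hf.fderiv_right (m := (⊤ : ℕ∞)) (by simp)).fderiv_right (m := (⊤ : ℕ∞)) (by simp)).clm_apply contDiff_const).clm_apply
    contDiff_const)

lemma cont_conj {X : Type*} [TopologicalSpace X] {f : X → ℂ} (hf : Continuous f) :
    Continuous fun x => (starRingEnd ℂ) (f x) :=
  continuous_star.comp hf

lemma DDw_symm {f : Pt → ℂ} (hf : ContDiff ℝ (⊤ : ℕ∞) f) (p w w' : Pt) :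
    DDw w w' f p = DDw w' w f p := by
  have h1 : ∀ x, HasFDerivAt f (fderiv ℝ f x) x :=
    fun x => (hf.differentiable (by simp) x).hasFDerivAt
  have h2 : HasFDerivAt (fderiv ℝ f) (fderiv ℝ (fderiv ℝ f) p) p :=
    ((hf.fderiv_right (m := (⊤ : ℕ∞)) (by simp)).differentiable (by simp) p).hasFDerivAt
  exact second_derivative_symmetric h1 h2 w w'

lemma POpS_eq {a : ℝ × ℝ → ℂ} {u : Pt → ℂ} (hu : Differentiable ℝ u) (p : Pt) :
    POpS a u p = PuF a u p := by
  show POp a (fun z => u (p.1, z)) p.2 = _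
  unfold POp
  rw [d2_slice hu p, d3_slice hu p]
  simp [PuF, Dw, ee2, ee3]

lemma PAdjS_eq {a : ℝ × ℝ → ℂ} {v : Pt → ℂ} (hv : Differentiable ℝ v) (p : Pt) :
    PAdjS a v p = QvF a v p := by
  show PAdj a (fun z => v (p.1, z)) p.2 = _
  unfold PAdj
  rw [d2_slice hv p, d3_slice hv p]
  simp [QvF, Dw, ee2, ee3]

lemma cross_algebra (A uu vv u1 u2 u3 v1 v2 v3 h12 h13 : ℂ) :
    ‖u1 - Complex.I * (-(v2) + Complex.I * v3 + (starRingEnd ℂ) A * vv)‖ ^ 2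
      + ‖v1 + Complex.I * (u2 + Complex.I * u3 + A * uu)‖ ^ 2
    = (‖u1‖ ^ 2 + ‖-(v2) + Complex.I * v3 + (starRingEnd ℂ) A * vv‖ ^ 2
        + ‖v1‖ ^ 2 + ‖u2 + Complex.I * u3 + A * uu‖ ^ 2)
      + 2 * (((v1 * (starRingEnd ℂ) (u2 + Complex.I * u3 + A * uu)
            + vv * (starRingEnd ℂ) (h12 + Complex.I * h13 + A * u1)).im)
          - ((v2 * (starRingEnd ℂ) u1 + vv * (starRingEnd ℂ) h12).im)
          + ((v3 * (starRingEnd ℂ) u1 + vv * (starRingEnd ℂ) h13).re)) := by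
  simp only [Complex.sq_norm, Complex.normSq_apply, Complex.add_re,
    Complex.add_im, Complex.sub_re, Complex.sub_im, Complex.mul_re, Complex.mul_im,
    Complex.neg_re, Complex.neg_im, Complex.I_re, Complex.I_im, Complex.conj_re,
    Complex.conj_im]
  ring

/-- Flat-model version of the first eigenvalue estimate
`λ_{𝒟₋} ≥ min{λ_{∂̄}, 2/ε²}` (Theorem 1ev, boundary condition `v|_{∂A_ε} = 0`). -/
theorem first_eigenvalue_estimate_Dminus
    (ε : ℝ) (hε : 0 < ε) (a : ℝ × ℝ → ℂ) (ha : ContDiff ℝ (⊤ : ℕ∞) a) (hap : Per2 a)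
    (lam : ℝ) (hlam : 0 < lam)
    (hP : ∀ φ : ℝ × ℝ → ℂ, ContDiff ℝ (⊤ : ℕ∞) φ → Per2 φ →
      (∫ z in T2, ‖POp a φ z‖ ^ 2) ≥ lam * ∫ z in T2, ‖φ z‖ ^ 2)
    (u v : Pt → ℂ) (hu : ContDiff ℝ (⊤ : ℕ∞) u) (hv : ContDiff ℝ (⊤ : ℕ∞) v)
    (hup : Per23 u) (hvp : Per23 v)
    (hbv : ∀ z : ℝ × ℝ, v (0, z) = 0 ∧ v (ε, z) = 0) :
    (∫ p in Aeps ε, (‖d1 u p - Complex.I * PAdjS a v p‖ ^ 2 +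
        ‖d1 v p + Complex.I * POpS a u p‖ ^ 2)) ≥
      min lam (2 / ε ^ 2) * ∫ p in Aeps ε, (‖u p‖ ^ 2 + ‖v p‖ ^ 2) := by
  have hud : Differentiable ℝ u := hu.differentiable (by simp)
  have hvd : Differentiable ℝ v := hv.differentiable (by simp)
  have hFud : Differentiable ℝ (fderiv ℝ u) := (hu.fderiv_right (m := (⊤ : ℕ∞)) (by simp)).differentiable (by simp)
  -- continuity facts
  have hcu : Continuous u := hu.continuous
  have hcv : Continuous v := hv.continuous
  have hca : Continuous fun p : Pt => a p.2 := ha.continuous.comp continuous_snd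
  have hcDu1 : Continuous (Dw ee1 u) := (contDiff_Dw hu ee1).continuous
  have hcDu2 : Continuous (Dw ee2 u) := (contDiff_Dw hu ee2).continuous
  have hcDu3 : Continuous (Dw ee3 u) := (contDiff_Dw hu ee3).continuous
  have hcDv1 : Continuous (Dw ee1 v) := (contDiff_Dw hv ee1).continuous
  have hcDv2 : Continuous (Dw ee2 v) := (contDiff_Dw hv ee2).continuous
  have hcDv3 : Continuous (Dw ee3 v) := (contDiff_Dw hv ee3).continuous
  have hcD12 : Continuous (DDw ee1 ee2 u) := (contDiff_DDw hu ee1 ee2).continuous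
  have hcD13 : Continuous (DDw ee1 ee3 u) := (contDiff_DDw hu ee1 ee3).continuous
  have hcD21 : Continuous (DDw ee2 ee1 u) := (contDiff_DDw hu ee2 ee1).continuous
  have hcD31 : Continuous (DDw ee3 ee1 u) := (contDiff_DDw hu ee3 ee1).continuous
  have hcPu : Continuous (PuF a u) :=
    (hcDu2.add (continuous_const.mul hcDu3)).add (hca.mul hcu)
  have hcQv : Continuous (QvF a v) :=
    (hcDv2.neg.add (continuous_const.mul hcDv3)).add ((cont_conj hca).mul hcv)
  have hcc1 : Continuous (c1F a u v) :=
    Complex.continuous_im.comp ((hcDv1.mul (cont_conj hcPu)).add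
      (hcv.mul (cont_conj ((hcD12.add (continuous_const.mul hcD13)).add (hca.mul hcDu1)))))
  have hcc2 : Continuous (c2F u v) :=
    Complex.continuous_im.comp ((hcDv2.mul (cont_conj hcDu1)).add (hcv.mul (cont_conj hcD21)))
  have hcc3 : Continuous (c3F u v) :=
    Complex.continuous_re.comp ((hcDv3.mul (cont_conj hcDu1)).add (hcv.mul (cont_conj hcD31)))
  -- derivatives of first derivatives along lines
  have hDw1 : ∀ (w : Pt) (t : ℝ) (z : ℝ × ℝ),
      HasDerivAt (fun s => Dw w u (s, z)) (DDw ee1 w u (t, z)) t := by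
    intro w t z
    have h := (hasDerivAt_line1 hFud t z).clm_apply (hasDerivAt_const t w)
    simpa [Dw, DDw, ee1] using h
  have hDw2 : ∀ (w : Pt) (t x y : ℝ),
      HasDerivAt (fun s => Dw w u (t, s, y)) (DDw ee2 w u (t, x, y)) x := by
    intro w t x y
    have h := (hasDerivAt_line2 hFud t x y).clm_apply (hasDerivAt_const x w)
    simpa [Dw, DDw, ee2] using h
  have hDw3 : ∀ (w : Pt) (t x y : ℝ),
      HasDerivAt (fun s => Dw w u (t, x, s)) (DDw ee3 w u (t, x, y)) y := by
    intro w t x y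
    have h := (hasDerivAt_line3 hFud t x y).clm_apply (hasDerivAt_const y w)
    simpa [Dw, DDw, ee3] using h
  -- FTC data for the cross terms
  have hc1 : ∀ (t : ℝ) (z : ℝ × ℝ),
      HasDerivAt (fun s => g1F a u v (s, z)) (c1F a u v (t, z)) t := by
    intro t z
    have hv1 : HasDerivAt (fun s => v (s, z)) (Dw ee1 v (t, z)) t := by
      simpa [Dw, ee1] using hasDerivAt_line1 hvd t z
    have hu0 : HasDerivAt (fun s => u (s, z)) (Dw ee1 u (t, z)) t := by
      simpa [Dw, ee1] using hasDerivAt_line1 hud t z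
    have hPu : HasDerivAt (fun s => PuF a u (s, z))
        (DDw ee1 ee2 u (t, z) + Complex.I * DDw ee1 ee3 u (t, z) + a z * Dw ee1 u (t, z)) t := by
      exact ((hDw1 ee2 t z).add ((hDw1 ee3 t z).const_mul Complex.I)).add (hu0.const_mul (a z))
    exact (hv1.mul hPu.conj').im'
  have hc2 : ∀ (t x y : ℝ),
      HasDerivAt (fun s => g2F u v (t, s, y)) (c2F u v (t, x, y)) x := by
    intro t x y
    have hv2 : HasDerivAt (fun s => v (t, s, y)) (Dw ee2 v (t, x, y)) x := by
      simpa [Dw, ee2] using hasDerivAt_line2 hvd t x y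
    exact (hv2.mul (hDw2 ee1 t x y).conj').im'
  have hc3 : ∀ (t x y : ℝ),
      HasDerivAt (fun s => g3F u v (t, x, s)) (c3F u v (t, x, y)) y := by
    intro t x y
    have hv3 : HasDerivAt (fun s => v (t, x, s)) (Dw ee3 v (t, x, y)) y := by
      simpa [Dw, ee3] using hasDerivAt_line3 hvd t x y
    exact (hv3.mul (hDw3 ee1 t x y).conj').re'
  -- boundary and periodicity of the potentials
  have hb1 : ∀ z, g1F a u v (ε, z) = g1F a u v (0, z) := by
    intro z; simp [g1F, (hbv z).1, (hbv z).2]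
  have hper2u : ∀ p : Pt, u (p + ((0:ℝ), (1:ℝ), (0:ℝ))) = u p := by
    intro p
    have h := (hup p.1).1 p.2.1 p.2.2
    have he : p + (((0:ℝ), (1:ℝ), (0:ℝ)) : Pt) = (p.1, p.2.1 + 1, p.2.2) := by
      simp [Prod.ext_iff]
    rw [he]; simpa using h
  have hper3u : ∀ p : Pt, u (p + ((0:ℝ), (0:ℝ), (1:ℝ))) = u p := by
    intro p
    have h := (hup p.1).2 p.2.1 p.2.2
    have he : p + (((0:ℝ), (0:ℝ), (1:ℝ)) : Pt) = (p.1, p.2.1, p.2.2 + 1) := by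
      simp [Prod.ext_iff]
    rw [he]; simpa using h
  have hDu1per2 : ∀ (t y : ℝ), Dw ee1 u (t, 1, y) = Dw ee1 u (t, 0, y) := by
    intro t y
    have h := fderiv_shift hud _ hper2u (t, 0, y)
    have he : ((t, 0, y) : Pt) + ((0:ℝ), (1:ℝ), (0:ℝ)) = ((t, 1, y) : Pt) := by
      simp [Prod.ext_iff]
    rw [he] at h
    simp [Dw, h]
  have hDu1per3 : ∀ (t x : ℝ), Dw ee1 u (t, x, 1) = Dw ee1 u (t, x, 0) := by
    intro t x
    have h := fderiv_shift hud _ hper3u (t, x, 0)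
    have he : ((t, x, 0) : Pt) + ((0:ℝ), (0:ℝ), (1:ℝ)) = ((t, x, 1) : Pt) := by
      simp [Prod.ext_iff]
    rw [he] at h
    simp [Dw, h]
  have hvper2 : ∀ (t y : ℝ), v (t, 1, y) = v (t, 0, y) := by
    intro t y
    have h := (hvp t).1 0 y
    simpa using h
  have hvper3 : ∀ (t x : ℝ), v (t, x, 1) = v (t, x, 0) := by
    intro t x
    have h := (hvp t).2 x 0
    simpa using h
  have hb2 : ∀ t y, g2F u v (t, 1, y) = g2F u v (t, 0, y) := by
    intro t y; simp [g2F, hvper2 t y, hDu1per2 t y]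
  have hb3 : ∀ t x, g3F u v (t, x, 1) = g3F u v (t, x, 0) := by
    intro t x; simp [g3F, hvper3 t x, hDu1per3 t x]
  -- vanishing of the cross terms
  have hzero1 : ∫ p in Aeps ε, c1F a u v p = 0 :=
    vanish1 hε.le (g1F a u v) (c1F a u v) hcc1 hc1 hb1
  have hzero2 : ∫ p in Aeps ε, c2F u v p = 0 :=
    vanish2 (g2F u v) (c2F u v) hcc2 hc2 hb2
  have hzero3 : ∫ p in Aeps ε, c3F u v p = 0 :=
    vanish3 (g3F u v) (c3F u v) hcc3 hc3 hb3
  -- pointwise expansion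
  have hsymm12 : ∀ p : Pt, DDw ee1 ee2 u p = DDw ee2 ee1 u p := fun p => DDw_symm hu p ee1 ee2
  have hsymm13 : ∀ p : Pt, DDw ee1 ee3 u p = DDw ee3 ee1 u p := fun p => DDw_symm hu p ee1 ee3
  have hpoint : ∀ p : Pt,
      ‖d1 u p - Complex.I * PAdjS a v p‖ ^ 2 + ‖d1 v p + Complex.I * POpS a u p‖ ^ 2
      = (‖Dw ee1 u p‖ ^ 2 + ‖QvF a v p‖ ^ 2 + ‖Dw ee1 v p‖ ^ 2 + ‖PuF a u p‖ ^ 2)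
        + 2 * (c1F a u v p - c2F u v p + c3F u v p) := by
    intro p
    rw [PAdjS_eq hvd p, POpS_eq hud p]
    have e2 : c2F u v p
        = (Dw ee2 v p * (starRingEnd ℂ) (Dw ee1 u p)
            + v p * (starRingEnd ℂ) (DDw ee1 ee2 u p)).im := by
      unfold c2F; rw [← hsymm12 p]
    have e3 : c3F u v p
        = (Dw ee3 v p * (starRingEnd ℂ) (Dw ee1 u p)
            + v p * (starRingEnd ℂ) (DDw ee1 ee3 u p)).re := by
      unfold c3F; rw [← hsymm13 p]
    rw [e2, e3]
    exact cross_algebra (a p.2) (u p) (v p) (Dw ee1 u p) (Dw ee2 u p) (Dw ee3 u p)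
      (Dw ee1 v p) (Dw ee2 v p) (Dw ee3 v p) (DDw ee1 ee2 u p) (DDw ee1 ee3 u p)
  -- integral identity
  have hIq : IntegrableOn (fun p => ‖Dw ee1 u p‖ ^ 2 + ‖QvF a v p‖ ^ 2 + ‖Dw ee1 v p‖ ^ 2
      + ‖PuF a u p‖ ^ 2) (Aeps ε) :=
    integrableOn_Aeps (((((hcDu1.norm.pow 2).add (hcQv.norm.pow 2)).add
      (hcDv1.norm.pow 2)).add (hcPu.norm.pow 2)))
  have hIc1 : IntegrableOn (c1F a u v) (Aeps ε) := integrableOn_Aeps hcc1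
  have hIc2 : IntegrableOn (c2F u v) (Aeps ε) := integrableOn_Aeps hcc2
  have hIc3 : IntegrableOn (c3F u v) (Aeps ε) := integrableOn_Aeps hcc3
  have hIc : IntegrableOn (fun p => c1F a u v p - c2F u v p + c3F u v p) (Aeps ε) :=
    integrableOn_Aeps ((hcc1.sub hcc2).add hcc3)
  have hIc12 : IntegrableOn (fun p => c1F a u v p - c2F u v p) (Aeps ε) :=
    integrableOn_Aeps (hcc1.sub hcc2)
  have hints : ∫ p in Aeps ε, (‖d1 u p - Complex.I * PAdjS a v p‖ ^ 2
        + ‖d1 v p + Complex.I * POpS a u p‖ ^ 2)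
      = ∫ p in Aeps ε, (‖Dw ee1 u p‖ ^ 2 + ‖QvF a v p‖ ^ 2 + ‖Dw ee1 v p‖ ^ 2
        + ‖PuF a u p‖ ^ 2) := by
    calc ∫ p in Aeps ε, (‖d1 u p - Complex.I * PAdjS a v p‖ ^ 2
          + ‖d1 v p + Complex.I * POpS a u p‖ ^ 2)
        = ∫ p in Aeps ε, ((‖Dw ee1 u p‖ ^ 2 + ‖QvF a v p‖ ^ 2 + ‖Dw ee1 v p‖ ^ 2
            + ‖PuF a u p‖ ^ 2) + 2 * (c1F a u v p - c2F u v p + c3F u v p)) := by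
          simp only [hpoint]
      _ = (∫ p in Aeps ε, (‖Dw ee1 u p‖ ^ 2 + ‖QvF a v p‖ ^ 2 + ‖Dw ee1 v p‖ ^ 2
            + ‖PuF a u p‖ ^ 2))
          + ∫ p in Aeps ε, 2 * (c1F a u v p - c2F u v p + c3F u v p) :=
          integral_add hIq (hIc.const_mul 2)
      _ = (∫ p in Aeps ε, (‖Dw ee1 u p‖ ^ 2 + ‖QvF a v p‖ ^ 2 + ‖Dw ee1 v p‖ ^ 2
            + ‖PuF a u p‖ ^ 2))
          + 2 * ((∫ p in Aeps ε, c1F a u v p) - (∫ p in Aeps ε, c2F u v p)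
            + ∫ p in Aeps ε, c3F u v p) := by
          rw [integral_const_mul, integral_add hIc12 hIc3, integral_sub hIc1 hIc2]
      _ = ∫ p in Aeps ε, (‖Dw ee1 u p‖ ^ 2 + ‖QvF a v p‖ ^ 2 + ‖Dw ee1 v p‖ ^ 2
            + ‖PuF a u p‖ ^ 2) := by
          rw [hzero1, hzero2, hzero3]; ring
  -- splitting the quadratic part
  have hsplitQ : ∫ p in Aeps ε, (‖Dw ee1 u p‖ ^ 2 + ‖QvF a v p‖ ^ 2 + ‖Dw ee1 v p‖ ^ 2
        + ‖PuF a u p‖ ^ 2)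
      = (∫ p in Aeps ε, (‖Dw ee1 u p‖ ^ 2 + ‖QvF a v p‖ ^ 2))
        + (∫ p in Aeps ε, ‖Dw ee1 v p‖ ^ 2) + ∫ p in Aeps ε, ‖PuF a u p‖ ^ 2 := by
    rw [integral_add (f := fun p => ‖Dw ee1 u p‖ ^ 2 + ‖QvF a v p‖ ^ 2 + ‖Dw ee1 v p‖ ^ 2)
        (g := fun p => ‖PuF a u p‖ ^ 2) (integrableOn_Aeps (((hcDu1.norm.pow 2).add (hcQv.norm.pow 2)).add
        (hcDv1.norm.pow 2))) (integrableOn_Aeps (hcPu.norm.pow 2)),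
      integral_add (f := fun p => ‖Dw ee1 u p‖ ^ 2 + ‖QvF a v p‖ ^ 2)
        (g := fun p => ‖Dw ee1 v p‖ ^ 2) (integrableOn_Aeps ((hcDu1.norm.pow 2).add (hcQv.norm.pow 2)))
        (integrableOn_Aeps (hcDv1.norm.pow 2))]
  have hq12 : 0 ≤ ∫ p in Aeps ε, (‖Dw ee1 u p‖ ^ 2 + ‖QvF a v p‖ ^ 2) :=
    integral_nonneg fun p => add_nonneg (sq_nonneg _) (sq_nonneg _)
  -- spectral estimate for u
  have hspec : lam * ∫ p in Aeps ε, ‖u p‖ ^ 2 ≤ ∫ p in Aeps ε, ‖PuF a u p‖ ^ 2 := by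
    have h0 : ∫ p in Aeps ε, lam * ‖u p‖ ^ 2 ≤ ∫ p in Aeps ε, ‖PuF a u p‖ ^ 2 := by
      apply slice_mono (fun p => lam * ‖u p‖ ^ 2) (fun p => ‖PuF a u p‖ ^ 2) (continuous_const.mul (hcu.norm.pow 2)) (hcPu.norm.pow 2)
      intro t
      have hφ : ContDiff ℝ (⊤ : ℕ∞) fun z => u (t, z) := hu.comp (contDiff_const.prodMk contDiff_id)
      have h := hP (fun z => u (t, z)) hφ (hup t)
      have heq : ∀ z : ℝ × ℝ, ‖POp a (fun z' => u (t, z')) z‖ ^ 2 = ‖PuF a u (t, z)‖ ^ 2 := by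
        intro z
        rw [show POp a (fun z' => u (t, z')) z = PuF a u (t, z) from POpS_eq hud (t, z)]
      rw [integral_const_mul]
      calc lam * ∫ z in T2, ‖u (t, z)‖ ^ 2
          ≤ ∫ z in T2, ‖POp a (fun z' => u (t, z')) z‖ ^ 2 := h
        _ = ∫ z in T2, ‖PuF a u (t, z)‖ ^ 2 := by simp only [heq]
    rwa [integral_const_mul] at h0
  -- Poincaré estimate for v
  have hpoin : 2 / ε ^ 2 * ∫ p in Aeps ε, ‖v p‖ ^ 2 ≤ ∫ p in Aeps ε, ‖Dw ee1 v p‖ ^ 2 := by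
    have h0 : ∫ p in Aeps ε, 2 / ε ^ 2 * ‖v p‖ ^ 2 ≤ ∫ p in Aeps ε, ‖Dw ee1 v p‖ ^ 2 := by
      apply slice_mono' (fun p => 2 / ε ^ 2 * ‖v p‖ ^ 2) (fun p => ‖Dw ee1 v p‖ ^ 2) (continuous_const.mul (hcv.norm.pow 2)) (hcDv1.norm.pow 2)
      intro z
      have hdz : ∀ t : ℝ, HasDerivAt (fun s => v (s, z)) (Dw ee1 v (t, z)) t := fun t => by
        simpa [Dw, ee1] using hasDerivAt_line1 hvd t z
      have hp := poincare1d hε (fun s => v (s, z)) (fun t => Dw ee1 v (t, z))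
        (hcDv1.comp (continuous_id.prodMk continuous_const)) hdz (hbv z).1
      rw [integral_const_mul]
      have hε2 : (0:ℝ) < ε ^ 2 := pow_pos hε 2
      calc 2 / ε ^ 2 * ∫ t in Set.Icc 0 ε, ‖v (t, z)‖ ^ 2
          ≤ 2 / ε ^ 2 * (ε ^ 2 / 2 * ∫ t in Set.Icc 0 ε, ‖Dw ee1 v (t, z)‖ ^ 2) :=
            mul_le_mul_of_nonneg_left hp (by positivity)
        _ = ∫ t in Set.Icc 0 ε, ‖Dw ee1 v (t, z)‖ ^ 2 := by
            field_simp
    rwa [integral_const_mul] at h0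
  -- assembly
  have hU : (0:ℝ) ≤ ∫ p in Aeps ε, ‖u p‖ ^ 2 := integral_nonneg fun p => sq_nonneg _
  have hV : (0:ℝ) ≤ ∫ p in Aeps ε, ‖v p‖ ^ 2 := integral_nonneg fun p => sq_nonneg _
  have hRHS : ∫ p in Aeps ε, (‖u p‖ ^ 2 + ‖v p‖ ^ 2)
      = (∫ p in Aeps ε, ‖u p‖ ^ 2) + ∫ p in Aeps ε, ‖v p‖ ^ 2 :=
    integral_add (integrableOn_Aeps (hcu.norm.pow 2)) (integrableOn_Aeps (hcv.norm.pow 2))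
  have hm1 : min lam (2 / ε ^ 2) * ∫ p in Aeps ε, ‖u p‖ ^ 2 ≤ lam * ∫ p in Aeps ε, ‖u p‖ ^ 2 :=
    mul_le_mul_of_nonneg_right (min_le_left _ _) hU
  have hm2 : min lam (2 / ε ^ 2) * ∫ p in Aeps ε, ‖v p‖ ^ 2
      ≤ 2 / ε ^ 2 * ∫ p in Aeps ε, ‖v p‖ ^ 2 :=
    mul_le_mul_of_nonneg_right (min_le_right _ _) hV
  rw [ge_iff_le, hints, hsplitQ, hRHS, mul_add]
  linarith [hq12, hspec, hpoin, hm1, hm2]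
end
end

section
/- For all u, v ∈ Im 𝕆, the cross product u × v is orthogonal to both factors: ⟨u × v, u⟩ = 0 and ⟨u × v, v⟩ = 0. (Property (i) of the 2-fold vector cross product on Im 𝕆 defined by u × v = Im(v̄·u).) -/
noncomputable section

/-- The real quaternions. -/
abbrev Quat : Type := Quaternion ℝ

/-- The octonions, as pairs of quaternions (Cayley–Dickson construction). -/
abbrev Oct : Type := Quat × Quat

/-- Cayley–Dickson multiplication `(a,x)*(b,y) = (a*b − conj(y)*x, y*a + x*conj(b))`. -/
def omul (p q : Oct) : Oct :=
  (p.1 * q.1 - star q.2 * p.2, q.2 * p.1 + p.2 * star q.1)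

/-- Octonion conjugation `conj (a,x) = (conj a, −x)`. -/
def oconj (p : Oct) : Oct := (star p.1, -p.2)

/-- The real part `re (a,x) = re a`. -/
def ore (p : Oct) : ℝ := p.1.re

/-- The inner product `⟨(a,x),(b,y)⟩ = re(a * conj b) + re(x * conj y)`. -/
def oinner (p q : Oct) : ℝ := (p.1 * star q.1).re + (p.2 * star q.2).re

/-- The projection `im (a,x) = (a − re a, x)` onto the imaginary octonions. -/
def oim (p : Oct) : Oct := (p.1 - ((p.1.re : ℝ) : Quat), p.2)

/-- The 2-fold vector cross product `u × v = Im(conj(v) * u)` on `Im 𝕆`. -/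
def ocross (u v : Oct) : Oct := oim (omul (oconj v) u)

/-- The associative (G₂) 3-form `Ω₀(u,v,w) = ⟨u × v, w⟩`. -/
def Om (u v w : Oct) : ℝ := oinner (ocross u v) w

/-- The quaternion units. -/
def qi : Quat := ⟨0, 1, 0, 0⟩
def qj : Quat := ⟨0, 0, 1, 0⟩
def qk : Quat := ⟨0, 0, 0, 1⟩

/-- The standard basis `e₁,…,e₇` of `Im 𝕆` (indexed by `Fin 7`, so `e 0 = e₁`). -/
def e : Fin 7 → Oct :=
  ![(qi, 0), (qj, 0), (qk, 0), (0, 1), (0, qi), (0, qj), (0, qk)]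

/-- Property (i) of the 2-fold vector cross product on `Im 𝕆`:
`u × v` is orthogonal to both `u` and `v`. -/
theorem ocross_orthogonal (u v : Oct) (hu : ore u = 0) (hv : ore v = 0) :
    oinner (ocross u v) u = 0 ∧ oinner (ocross u v) v = 0 := by
  simp only [ore] at hu hv
  simp [oinner, ocross, oim, omul, oconj, Quaternion.ext_iff, hu, hv,
    Quaternion.re_mul, Quaternion.re_sub, Quaternion.re_coe, Quaternion.re_star,
    Quaternion.imI_star, Quaternion.imJ_star, Quaternion.imK_star,
    Quaternion.imI_mul, Quaternion.imJ_mul, Quaternion.imK_mul,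
    Quaternion.imI_sub, Quaternion.imJ_sub, Quaternion.imK_sub,
    Quaternion.imI_coe, Quaternion.imJ_coe, Quaternion.imK_coe]
  constructor <;> ring
end
end

section
/- For all u, v ∈ Im 𝕆, one has ‖u × v‖² = ‖u‖²·‖v‖² − ⟨u,v⟩². In particular, |u × v| equals the area of the parallelogram spanned by u and v. (Property (ii) of the 2-fold vector cross product on Im 𝕆 defined by u × v = Im(v̄·u).) -/
noncomputable section

/-- Property (ii) of the 2-fold vector cross product on `Im 𝕆`:
`‖u × v‖² = ‖u‖²‖v‖² − ⟨u,v⟩²`, the squared area of the parallelogram spanned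
by `u` and `v`. -/
theorem ocross_norm_sq (u v : Oct) (hu : ore u = 0) (hv : ore v = 0) :
    oinner (ocross u v) (ocross u v) =
      oinner u u * oinner v v - (oinner u v) ^ 2 := by
  obtain ⟨a, x⟩ := u
  obtain ⟨b, y⟩ := v
  simp only [ore] at hu hv
  simp only [oinner, ocross, oim, omul, oconj]
  simp only [Quaternion.re_mul, Quaternion.imI_mul, Quaternion.imJ_mul, Quaternion.imK_mul,
    Quaternion.re_sub, Quaternion.imI_sub, Quaternion.imJ_sub, Quaternion.imK_sub,
    Quaternion.re_add, Quaternion.imI_add, Quaternion.imJ_add, Quaternion.imK_add,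
    Quaternion.re_neg, Quaternion.imI_neg, Quaternion.imJ_neg, Quaternion.imK_neg,
    Quaternion.re_star, Quaternion.imI_star, Quaternion.imJ_star, Quaternion.imK_star,
    Quaternion.re_coe, Quaternion.imI_coe, Quaternion.imJ_coe, Quaternion.imK_coe, hu, hv]
  ring
end
end

section
/- (Calibration inequality for the G₂ 3-form.) Let u, v, w ∈ Im 𝕆 be pairwise orthogonal unit vectors. Then Ω₀(u,v,w) ≤ 1, and Ω₀(u,v,w) = 1 if and only if w = u × v. (The linear-algebra content of the equivalence between a 3-dimensional subspace of Im 𝕆 being closed under × and being calibrated by Ω₀.) -/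
noncomputable section

set_option maxHeartbeats 1000000 in
lemma cross_norm (u v : Oct) :
    oinner (ocross u v) (ocross u v) = oinner u u * oinner v v - (oinner u v)^2 := by
  simp [ocross, oim, omul, oconj, oinner, Quaternion.re_mul, Quaternion.imI_mul,
    Quaternion.imJ_mul, Quaternion.imK_mul]
  ring

lemma oinner_sub_self (c w : Oct) :
    oinner (c.1 - w.1, c.2 - w.2) (c.1 - w.1, c.2 - w.2)
      = oinner c c - 2 * oinner c w + oinner w w := by
  simp [oinner, Quaternion.re_mul]
  ring

lemma oinner_sub_self_sq (c w : Oct) :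
    oinner (c.1 - w.1, c.2 - w.2) (c.1 - w.1, c.2 - w.2)
      = (c.1.re - w.1.re)^2 + (c.1.imI - w.1.imI)^2 + (c.1.imJ - w.1.imJ)^2
        + (c.1.imK - w.1.imK)^2 + (c.2.re - w.2.re)^2 + (c.2.imI - w.2.imI)^2
        + (c.2.imJ - w.2.imJ)^2 + (c.2.imK - w.2.imK)^2 := by
  simp [oinner, Quaternion.re_mul]
  ring

lemma sq_eq_zero' {a b : ℝ} (h : (a - b)^2 = 0) : a = b :=
  sub_eq_zero.mp ((pow_eq_zero_iff (by norm_num : (2:ℕ) ≠ 0)).mp h)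



/-- Calibration inequality for the G₂ 3-form: on pairwise orthogonal unit vectors in
`Im 𝕆` one has `Ω₀(u,v,w) ≤ 1`, with equality exactly when `w = u × v`. -/
theorem Om_calibration (u v w : Oct)
    (hu : ore u = 0) (hv : ore v = 0) (hw : ore w = 0)
    (huu : oinner u u = 1) (hvv : oinner v v = 1) (hww : oinner w w = 1)
    (huv : oinner u v = 0) (huw : oinner u w = 0) (hvw : oinner v w = 0) :
    Om u v w ≤ 1 ∧ (Om u v w = 1 ↔ w = ocross u v) := by
  set c := ocross u v with hc
  have hcc : oinner c c = 1 := by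
    rw [hc, cross_norm, huu, hvv, huv]; ring
  have hOm : Om u v w = oinner c w := rfl
  have hdd : oinner (c.1 - w.1, c.2 - w.2) (c.1 - w.1, c.2 - w.2) = 2 - 2 * oinner c w := by
    rw [oinner_sub_self, hcc, hww]; ring
  have hnn : (0:ℝ) ≤ oinner (c.1 - w.1, c.2 - w.2) (c.1 - w.1, c.2 - w.2) := by
    rw [oinner_sub_self_sq]; positivity
  constructor
  · rw [hOm]; linarith
  constructor
  · intro h
    have hz : oinner (c.1 - w.1, c.2 - w.2) (c.1 - w.1, c.2 - w.2) = 0 := by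
      have h' : oinner c w = 1 := hOm.symm.trans h
      rw [hdd, h']; ring
    rw [oinner_sub_self_sq] at hz
    have e1 := sq_eq_zero' (a := c.1.re) (b := w.1.re) (by linarith [hz, sq_nonneg (c.1.re - w.1.re), sq_nonneg (c.1.imI - w.1.imI), sq_nonneg (c.1.imJ - w.1.imJ), sq_nonneg (c.1.imK - w.1.imK), sq_nonneg (c.2.re - w.2.re), sq_nonneg (c.2.imI - w.2.imI), sq_nonneg (c.2.imJ - w.2.imJ), sq_nonneg (c.2.imK - w.2.imK)])
    have e2 := sq_eq_zero' (a := c.1.imI) (b := w.1.imI) (by linarith [hz, sq_nonneg (c.1.re - w.1.re), sq_nonneg (c.1.imI - w.1.imI), sq_nonneg (c.1.imJ - w.1.imJ), sq_nonneg (c.1.imK - w.1.imK), sq_nonneg (c.2.re - w.2.re), sq_nonneg (c.2.imI - w.2.imI), sq_nonneg (c.2.imJ - w.2.imJ), sq_nonneg (c.2.imK - w.2.imK)])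
    have e3 := sq_eq_zero' (a := c.1.imJ) (b := w.1.imJ) (by linarith [hz, sq_nonneg (c.1.re - w.1.re), sq_nonneg (c.1.imI - w.1.imI), sq_nonneg (c.1.imJ - w.1.imJ), sq_nonneg (c.1.imK - w.1.imK), sq_nonneg (c.2.re - w.2.re), sq_nonneg (c.2.imI - w.2.imI), sq_nonneg (c.2.imJ - w.2.imJ), sq_nonneg (c.2.imK - w.2.imK)])
    have e4 := sq_eq_zero' (a := c.1.imK) (b := w.1.imK) (by linarith [hz, sq_nonneg (c.1.re - w.1.re), sq_nonneg (c.1.imI - w.1.imI), sq_nonneg (c.1.imJ - w.1.imJ), sq_nonneg (c.1.imK - w.1.imK), sq_nonneg (c.2.re - w.2.re), sq_nonneg (c.2.imI - w.2.imI), sq_nonneg (c.2.imJ - w.2.imJ), sq_nonneg (c.2.imK - w.2.imK)])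
    have e5 := sq_eq_zero' (a := c.2.re) (b := w.2.re) (by linarith [hz, sq_nonneg (c.1.re - w.1.re), sq_nonneg (c.1.imI - w.1.imI), sq_nonneg (c.1.imJ - w.1.imJ), sq_nonneg (c.1.imK - w.1.imK), sq_nonneg (c.2.re - w.2.re), sq_nonneg (c.2.imI - w.2.imI), sq_nonneg (c.2.imJ - w.2.imJ), sq_nonneg (c.2.imK - w.2.imK)])
    have e6 := sq_eq_zero' (a := c.2.imI) (b := w.2.imI) (by linarith [hz, sq_nonneg (c.1.re - w.1.re), sq_nonneg (c.1.imI - w.1.imI), sq_nonneg (c.1.imJ - w.1.imJ), sq_nonneg (c.1.imK - w.1.imK), sq_nonneg (c.2.re - w.2.re), sq_nonneg (c.2.imI - w.2.imI), sq_nonneg (c.2.imJ - w.2.imJ), sq_nonneg (c.2.imK - w.2.imK)])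
    have e7 := sq_eq_zero' (a := c.2.imJ) (b := w.2.imJ) (by linarith [hz, sq_nonneg (c.1.re - w.1.re), sq_nonneg (c.1.imI - w.1.imI), sq_nonneg (c.1.imJ - w.1.imJ), sq_nonneg (c.1.imK - w.1.imK), sq_nonneg (c.2.re - w.2.re), sq_nonneg (c.2.imI - w.2.imI), sq_nonneg (c.2.imJ - w.2.imJ), sq_nonneg (c.2.imK - w.2.imK)])
    have e8 := sq_eq_zero' (a := c.2.imK) (b := w.2.imK) (by linarith [hz, sq_nonneg (c.1.re - w.1.re), sq_nonneg (c.1.imI - w.1.imI), sq_nonneg (c.1.imJ - w.1.imJ), sq_nonneg (c.1.imK - w.1.imK), sq_nonneg (c.2.re - w.2.re), sq_nonneg (c.2.imI - w.2.imI), sq_nonneg (c.2.imJ - w.2.imJ), sq_nonneg (c.2.imK - w.2.imK)])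
    rw [Prod.ext_iff, Quaternion.ext_iff, Quaternion.ext_iff]
    exact ⟨⟨e1.symm, e2.symm, e3.symm, e4.symm⟩, e5.symm, e6.symm, e7.symm, e8.symm⟩
  · intro h
    rw [hOm, h]; exact hcc
end
end

section
/- Let W ⊆ Im 𝕆 be a 4-dimensional real subspace that is coassociative, i.e. Ω₀(u,v,w) = 0 for all u, v, w ∈ W. Then: (1) the orthogonal complement W^⊥ of W in Im 𝕆 is closed under the cross product (it is an associative 3-plane); (2) for every n ∈ W^⊥ and every w ∈ W, n × w ∈ W; and (3) for every unit vector n ∈ W^⊥, the alternating bilinear form ω_n(u,v) := Ω₀(n,u,v) on W is nondegenerate — indeed ω_n(u, n × u) = ‖u‖² for every u ∈ W. (The linear-algebra facts underlying the statement that ι_nΩ is a symplectic form on a coassociative submanifold with compatible almost complex structure J_n = n ×.) -/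
noncomputable section

/-- The real part as a linear functional on `𝕆`; its kernel is `Im 𝕆`. -/
def oreLin : Oct →ₗ[ℝ] ℝ where
  toFun p := ore p
  map_add' p q := by simp [ore]
  map_smul' r p := by simp [ore]

/-- Membership in the orthogonal complement of `W` inside `Im 𝕆`. -/
def InPerp (W : Submodule ℝ Oct) (x : Oct) : Prop :=
  ore x = 0 ∧ ∀ w ∈ W, oinner x w = 0

/-! ### Auxiliary lemmas -/

section Aux

-- simp set for component computations
attribute [local simp] oinner ocross oim omul oconj ore Om

lemma oinner_symm (p q : Oct) : oinner p q = oinner q p := by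
  obtain ⟨a, a'⟩ := p
  obtain ⟨b, b'⟩ := q
  simp [Quaternion.re_mul]
  ring

lemma ore_ocross (u v : Oct) : ore (ocross u v) = 0 := by
  simp

lemma ocross_zero_left (u : Oct) : ocross 0 u = 0 := by
  simp [Prod.ext_iff, Quaternion.re_zero]

lemma I4 (a b c : Oct) (ha : ore a = 0) (hb : ore b = 0) (hc : ore c = 0) :
    oinner (ocross a b) (ocross a c)
      = oinner a a * oinner b c - oinner a b * oinner a c := by
  obtain ⟨a, a'⟩ := a
  obtain ⟨b, b'⟩ := b
  obtain ⟨c, c'⟩ := c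
  simp only [ore] at ha hb hc
  simp only [oinner, ocross, oim, omul, oconj, Quaternion.re_mul, Quaternion.imI_mul,
    Quaternion.imJ_mul, Quaternion.imK_mul, Quaternion.re_star, Quaternion.imI_star,
    Quaternion.imJ_star, Quaternion.imK_star, Quaternion.re_sub, Quaternion.imI_sub,
    Quaternion.imJ_sub, Quaternion.imK_sub, Quaternion.re_add, Quaternion.imI_add,
    Quaternion.imJ_add, Quaternion.imK_add, Quaternion.re_neg, Quaternion.imI_neg,
    Quaternion.imJ_neg, Quaternion.imK_neg, Quaternion.re_coe, Quaternion.imI_coe,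
    Quaternion.imJ_coe, Quaternion.imK_coe, Prod.fst, Prod.snd, ha, hb, hc]
  ring

lemma Om_swap (u v w : Oct) (hu : ore u = 0) (hv : ore v = 0) :
    Om u v w = - Om v u w := by
  obtain ⟨a, a'⟩ := u
  obtain ⟨b, b'⟩ := v
  obtain ⟨c, c'⟩ := w
  simp only [ore] at hu hv
  simp [Quaternion.re_mul, Quaternion.imI_mul, Quaternion.imJ_mul, Quaternion.imK_mul, hu, hv]
  ring

lemma Om_cyc (u v w : Oct) (hu : ore u = 0) (hv : ore v = 0) (hw : ore w = 0) :
    Om u v w = Om w u v := by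
  obtain ⟨a, a'⟩ := u
  obtain ⟨b, b'⟩ := v
  obtain ⟨c, c'⟩ := w
  simp only [ore] at hu hv hw
  simp [Quaternion.re_mul, Quaternion.imI_mul, Quaternion.imJ_mul, Quaternion.imK_mul, hu, hv, hw]
  ring

lemma ocross_add (w x y : Oct) : ocross w (x + y) = ocross w x + ocross w y := by
  simp only [Prod.ext_iff, Quaternion.ext_iff, ocross, oim, omul, oconj,
    Prod.fst_add, Prod.snd_add, Quaternion.re_add, Quaternion.imI_add,
    Quaternion.imJ_add, Quaternion.imK_add, Quaternion.re_mul, Quaternion.imI_mul,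
    Quaternion.imJ_mul, Quaternion.imK_mul, Quaternion.re_star, Quaternion.imI_star,
    Quaternion.imJ_star, Quaternion.imK_star, Quaternion.re_sub, Quaternion.imI_sub,
    Quaternion.imJ_sub, Quaternion.imK_sub, Quaternion.re_neg, Quaternion.imI_neg,
    Quaternion.imJ_neg, Quaternion.imK_neg, Quaternion.re_coe, Quaternion.imI_coe,
    Quaternion.imJ_coe, Quaternion.imK_coe]
  and_intros <;> ring

lemma ocross_smul (w : Oct) (r : ℝ) (x : Oct) : ocross w (r • x) = r • ocross w x := by
  simp only [Prod.ext_iff, Quaternion.ext_iff, ocross, oim, omul, oconj,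
    Prod.smul_fst, Prod.smul_snd]
  and_intros <;>
  · simp only [Quaternion.re_smul, Quaternion.imI_smul,
      Quaternion.imJ_smul, Quaternion.imK_smul, Quaternion.re_mul, Quaternion.imI_mul,
      Quaternion.imJ_mul, Quaternion.imK_mul, Quaternion.re_star, Quaternion.imI_star,
      Quaternion.imJ_star, Quaternion.imK_star, Quaternion.re_sub, Quaternion.imI_sub,
      Quaternion.imJ_sub, Quaternion.imK_sub, Quaternion.re_neg, Quaternion.imI_neg,
      Quaternion.imJ_neg, Quaternion.imK_neg, Quaternion.re_add, Quaternion.imI_add,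
      Quaternion.imJ_add, Quaternion.imK_add, Quaternion.re_coe, Quaternion.imI_coe,
      Quaternion.imJ_coe, Quaternion.imK_coe, smul_eq_mul]
    ring

/-- `x ↦ w × x` as a linear map. -/
def crossL (w : Oct) : Oct →ₗ[ℝ] Oct where
  toFun x := ocross w x
  map_add' x y := ocross_add w x y
  map_smul' r x := ocross_smul w r x

end Aux

/-! ### Inner product space structure via `WithLp 2` -/

abbrev EOct : Type := WithLp 2 Oct

def eqv : EOct ≃ₗ[ℝ] Oct := WithLp.linearEquiv 2 ℝ Oct

@[simp] lemma eqv_toLp (x : Oct) : eqv (WithLp.toLp 2 x) = x := rfl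

lemma inner_eq (x y : EOct) : (inner ℝ x y : ℝ) = oinner (eqv x) (eqv y) := rfl

lemma oinner_self_eq_zero {x : Oct} (h : oinner x x = 0) : x = 0 := by
  have h' : (inner ℝ (eqv.symm x) (eqv.symm x) : ℝ) = 0 := by
    rw [inner_eq]; simpa using h
  have := inner_self_eq_zero.mp h'
  simpa using congrArg eqv this

lemma finrank_oct : Module.finrank ℝ Oct = 8 := by
  simp [Module.finrank_prod, Quaternion.finrank_eq_four]

set_option maxHeartbeats 2000000 in
/-- Linear algebra of coassociative 4-planes: if `W ⊆ Im 𝕆` is a 4-dimensional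
subspace with `Ω₀|_W = 0`, then (1) its orthogonal complement in `Im 𝕆` is closed
under the cross product; (2) `n × W ⊆ W` for every `n` in that complement; and
(3) for every unit `n` there, `ω_n(u,v) := Ω₀(n,u,v)` is nondegenerate on `W`,
indeed `ω_n(u, n × u) = ‖u‖²`. -/
theorem coassociative_plane_facts (W : Submodule ℝ Oct)
    (hdim : Module.finrank ℝ W = 4)
    (hWim : ∀ x ∈ W, ore x = 0)
    (hcoassoc : ∀ u ∈ W, ∀ v ∈ W, ∀ w ∈ W, Om u v w = 0) :
    (∀ u v : Oct, InPerp W u → InPerp W v → InPerp W (ocross u v)) ∧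
    (∀ n : Oct, InPerp W n → ∀ w ∈ W, ocross n w ∈ W) ∧
    (∀ n : Oct, InPerp W n → oinner n n = 1 →
      (∀ u ∈ W, Om n u (ocross n u) = oinner u u) ∧
      (∀ u ∈ W, (∀ w ∈ W, Om n u w = 0) → u = 0)) := by
  classical
  -- transported submodules
  set W' : Submodule ℝ EOct := W.map eqv.symm.toLinearMap with hW'def
  have hmemW' : ∀ x : EOct, x ∈ W' ↔ eqv x ∈ W := by
    intro x
    rw [hW'def, Submodule.mem_map_equiv]
    simp
  have hrankW' : Module.finrank ℝ W' = 4 := by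
    rw [hW'def, LinearEquiv.finrank_map_eq eqv.symm W]; exact hdim
  set V' : Submodule ℝ EOct := (LinearMap.ker oreLin).map eqv.symm.toLinearMap with hV'def
  have hmemV' : ∀ x : EOct, x ∈ V' ↔ ore (eqv x) = 0 := by
    intro x
    rw [hV'def, Submodule.mem_map_equiv]
    simp [LinearMap.mem_ker, oreLin]
    exact Iff.rfl
  have hrankV' : Module.finrank ℝ V' = 7 := by
    rw [hV'def, LinearEquiv.finrank_map_eq eqv.symm]
    have hsurj : Function.Surjective oreLin := by
      intro r
      exact ⟨(((r : ℝ) : Quat), 0), by simp [oreLin, ore]⟩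
    have h1 := LinearMap.finrank_range_add_finrank_ker oreLin
    rw [LinearMap.range_eq_top.mpr hsurj, finrank_top, finrank_oct] at h1
    simp at h1
    omega
  have hW'V' : W' ≤ V' := by
    intro x hx
    rw [hmemV']
    exact hWim _ ((hmemW' x).mp hx)
  set P : Submodule ℝ EOct := W'ᗮ ⊓ V' with hPdef
  have hmemP : ∀ x : EOct, x ∈ P ↔ InPerp W (eqv x) := by
    intro x
    rw [hPdef, Submodule.mem_inf, Submodule.mem_orthogonal, hmemV']
    constructor
    · rintro ⟨h1, h2⟩
      refine ⟨h2, fun w hw => ?_⟩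
      have := h1 (eqv.symm w) (by rw [hmemW']; simpa using hw)
      rw [inner_eq] at this
      simp at this
      rw [oinner_symm]
      exact this
    · rintro ⟨h1, h2⟩
      refine ⟨fun u hu => ?_, h1⟩
      rw [inner_eq, oinner_symm]
      exact h2 _ ((hmemW' u).mp hu)
  have hrankP : Module.finrank ℝ P = 3 := by
    have := Submodule.finrank_add_inf_finrank_orthogonal hW'V'
    rw [hrankW', hrankV'] at this
    have : Module.finrank ℝ ↥(W'ᗮ ⊓ V') = 3 := by omega
    rw [hPdef]; exact this
  -- positive definiteness helper
  have hpos : ∀ x : Oct, x ≠ 0 → oinner x x ≠ 0 := by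
    intro x hx h
    exact hx (oinner_self_eq_zero h)
  -- KEY: Ω(w, u, p) = 0 for w ∈ W, u p ∈ perp
  have key : ∀ w ∈ W, ∀ u p : Oct, InPerp W u → InPerp W p →
      oinner (ocross w u) p = 0 := by
    intro w hw u p hu hp
    by_cases hw0 : w = 0
    · subst hw0
      rw [show ocross (0 : Oct) u = 0 from ocross_zero_left u]
      simp [oinner, Quaternion.re_zero]
    -- S' := orthocomplement of w inside W'
    have hwW' : eqv.symm w ∈ W' := by rw [hmemW']; simpa using hw
    have hw0' : eqv.symm w ≠ 0 := by
      intro h; exact hw0 (by simpa using congrArg eqv h)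
    have hspan : (ℝ ∙ (eqv.symm w)) ≤ W' := by
      rw [Submodule.span_singleton_le_iff_mem]; exact hwW'
    set S : Submodule ℝ EOct := (ℝ ∙ (eqv.symm w))ᗮ ⊓ W' with hSdef
    have hrankS : Module.finrank ℝ S = 3 := by
      have := Submodule.finrank_add_inf_finrank_orthogonal hspan
      rw [finrank_span_singleton hw0', hrankW'] at this
      rw [hSdef]; omega
    -- the linear map x ↦ w × x on EOct
    set L : EOct →ₗ[ℝ] EOct :=
      (eqv.symm.toLinearMap.comp (crossL w)).comp eqv.toLinearMap with hLdef
    have hLapp : ∀ x : EOct, eqv (L x) = ocross w (eqv x) := by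
      intro x; rw [hLdef]; simp [crossL]
    have hmemS : ∀ x : EOct, x ∈ S ↔ (oinner w (eqv x) = 0 ∧ eqv x ∈ W) := by
      intro x
      rw [hSdef, Submodule.mem_inf, Submodule.mem_orthogonal, hmemW']
      constructor
      · rintro ⟨h1, h2⟩
        refine ⟨?_, h2⟩
        have := h1 (eqv.symm w) (Submodule.mem_span_singleton_self _)
        rw [inner_eq] at this
        simpa using this
      · rintro ⟨h1, h2⟩
        refine ⟨fun u hu => ?_, h2⟩
        rw [Submodule.mem_span_singleton] at hu
        obtain ⟨r, rfl⟩ := hu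
        have hbase : (inner ℝ (eqv.symm w) x : ℝ) = 0 := by
          rw [inner_eq]; simpa using h1
        rw [real_inner_smul_left, hbase, mul_zero]
    have hLmapsto : ∀ x ∈ S, L x ∈ P := by
      intro x hx
      rw [hmemP]
      obtain ⟨-, hxW⟩ := (hmemS x).mp hx
      rw [hLapp]
      refine ⟨ore_ocross _ _, fun m hm => ?_⟩
      exact hcoassoc w hw (eqv x) hxW m hm
    set f : S →ₗ[ℝ] P := L.restrict hLmapsto with hfdef
    have hfinj : Function.Injective f := by
      rw [← LinearMap.ker_eq_bot]
      rw [Submodule.eq_bot_iff]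
      rintro ⟨x, hx⟩ hker
      rw [LinearMap.mem_ker] at hker
      have hLx : L x = 0 := congrArg Subtype.val hker
      have hcr : ocross w (eqv x) = 0 := by
        rw [← hLapp, hLx]; simp
      obtain ⟨hwx, hxW⟩ := (hmemS x).mp hx
      have h4 := I4 w (eqv x) (eqv x) (hWim w hw) (hWim _ hxW) (hWim _ hxW)
      rw [hcr, hwx, show oinner (0 : Oct) (0 : Oct) = 0 by simp [oinner, Quaternion.re_zero]] at h4
      have hxx : oinner (eqv x) (eqv x) = 0 := by
        rcases mul_eq_zero.mp (by linarith : oinner w w * oinner (eqv x) (eqv x) = 0) with h | h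
        · exact absurd h (hpos w hw0)
        · exact h
      have hx0 := oinner_self_eq_zero hxx
      exact Subtype.ext (by simpa using congrArg eqv.symm hx0)
    have hfsurj : Function.Surjective f :=
      (LinearMap.injective_iff_surjective_of_finrank_eq_finrank
        (by rw [hrankS, hrankP])).mp hfinj
    -- p as w × x
    have hpP : eqv.symm p ∈ P := by rw [hmemP]; simpa using hp
    obtain ⟨⟨x, hxS⟩, hfx⟩ := hfsurj ⟨eqv.symm p, hpP⟩
    have hLx : L x = eqv.symm p := congrArg Subtype.val hfx
    have hpx : p = ocross w (eqv x) := by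
      rw [← hLapp, hLx]; simp
    obtain ⟨hwx, hxW⟩ := (hmemS x).mp hxS
    rw [hpx, I4 w u (eqv x) (hWim w hw) hu.1 (hWim _ hxW)]
    rw [hu.2 (eqv x) hxW, show oinner w u = 0 from (oinner_symm w u).trans (hu.2 w hw)]
    ring
  -- W = Pᗮ ⊓ V'  (double orthogonal complement)
  have hPV' : P ≤ V' := inf_le_right
  have hW'eq : W' = Pᗮ ⊓ V' := by
    refine Submodule.eq_of_le_of_finrank_eq ?_ ?_
    · intro x hx
      rw [Submodule.mem_inf, Submodule.mem_orthogonal]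
      refine ⟨fun q hq => ?_, hW'V' hx⟩
      obtain ⟨-, h2⟩ := (hmemP q).mp hq
      rw [inner_eq]
      exact h2 _ ((hmemW' x).mp hx)
    · have := Submodule.finrank_add_inf_finrank_orthogonal hPV'
      rw [hrankP, hrankV'] at this
      rw [hrankW']; omega
  have hWchar : ∀ x : Oct, ore x = 0 → (∀ q : Oct, InPerp W q → oinner x q = 0) →
      x ∈ W := by
    intro x h0 hperp
    have : eqv.symm x ∈ W' := by
      rw [hW'eq, Submodule.mem_inf, Submodule.mem_orthogonal]
      constructor
      · intro q hq
        have hq' := (hmemP q).mp hq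
        rw [inner_eq, oinner_symm]
        simpa using hperp (eqv q) hq'
      · rw [hmemV']; simpa using h0
    rw [hmemW'] at this
    simpa using this
  -- Part (2)
  have part2 : ∀ n : Oct, InPerp W n → ∀ w ∈ W, ocross n w ∈ W := by
    intro n hn w hw
    refine hWchar _ (ore_ocross _ _) (fun q hq => ?_)
    have h1 : Om n w q = - Om w n q := Om_swap n w q hn.1 (hWim w hw)
    have h2 : Om w n q = 0 := key w hw n q hn hq
    have : Om n w q = 0 := by rw [h1, h2]; ring
    exact this
  refine ⟨?_, part2, ?_⟩
  -- Part (1)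
  · intro u v hu hv
    refine ⟨ore_ocross _ _, fun m hm => ?_⟩
    have h1 : Om u v m = Om m u v := Om_cyc u v m hu.1 hv.1 (hWim m hm)
    have h2 : Om m u v = 0 := key m hm u v hu hv
    show Om u v m = 0
    rw [h1, h2]
  -- Part (3)
  · intro n hn hn1
    have part3a : ∀ u ∈ W, Om n u (ocross n u) = oinner u u := by
      intro u hu
      show oinner (ocross n u) (ocross n u) = oinner u u
      rw [I4 n u u hn.1 (hWim u hu) (hWim u hu), hn1, hn.2 u hu]
      ring
    refine ⟨part3a, fun u hu hvan => ?_⟩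
    have h1 := hvan (ocross n u) (part2 n hn u hu)
    rw [part3a u hu] at h1
    exact oinner_self_eq_zero h1
end
end
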